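/- arXiv:cs/0109033 — 2 statements merged into one kernel-verified Lean document; each statement's English description precedes it below -/
import Mathlib

section
/- Fix N C : ℕ and let A := Fin N × Bool × Fin C with the mutual-exclusion relation MutEx. Every S : Finset A that admits a consistent schedule for MutEx satisfies S.card ≤ N * C. -/
/-- A consistent schedule for a finite set `S` of accepted actions with respect to
the precedence relation `r` is a function `f : α → ℕ` injective on `S` with
`f a < f b` whenever `a ∈ S`, `b ∈ S` and `r a b`. -/
def ConsistentSchedule {α : Type*} (r : α → α → Prop) (S : Finset α) (f : α → ℕ) : Prop :=
  Set.InjOn f ↑S ∧ ∀ a ∈ S, ∀ b ∈ S, r a b → f a < f b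

/-- The mutual-exclusion relation on actions `A := Fin N × Bool × Fin C`:
`(v, false, i)` and `(v, true, j)` are related (in both orders) for all `v`, `i`, `j`,
and no other pairs are related. -/
def MutEx (N C : ℕ) (x y : Fin N × Bool × Fin C) : Prop :=
  x.1 = y.1 ∧ x.2.1 = !y.2.1

/-- `σ(η)`: the set of actions `(v, η v, i)` for `v : Fin N` and `i : Fin C`. -/
def sigmaSet (N C : ℕ) (η : Fin N → Bool) : Finset (Fin N × Bool × Fin C) :=
  Finset.univ.filter fun a => a.2.1 = η a.1

/-!
A schedule must order related actions strictly, so for a symmetric relation no two accepted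
actions can be related. Two actions `(v, false, i)` and `(v, true, i)` are `MutEx`-related, so
an accepted action is determined by its pair `(v, i)`, of which there are `N * C`.
-/

theorem ConsistentSchedule.not_rel {α : Type*} {r : α → α → Prop} [Std.Symm r] {S : Finset α}
    {f : α → ℕ} (hf : ConsistentSchedule r S f) {a b : α} (ha : a ∈ S) (hb : b ∈ S) :
    ¬ r a b :=
  fun hab => lt_asymm (hf.2 a ha b hb hab) (hf.2 b hb a ha (Std.Symm.symm a b hab))

theorem mutEx_iff {N C : ℕ} {x y : Fin N × Bool × Fin C} :
    MutEx N C x y ↔ x.1 = y.1 ∧ x.2.1 ≠ y.2.1 := by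
  rw [MutEx, Bool.eq_not_iff]

instance (N C : ℕ) : Std.Symm (MutEx N C) where
  symm _ _ h := by
    rw [mutEx_iff] at h ⊢
    exact ⟨h.1.symm, h.2.symm⟩

theorem card_le_of_forall_not_mutEx {N C : ℕ} {S : Finset (Fin N × Bool × Fin C)}
    (hS : ∀ a ∈ S, ∀ b ∈ S, ¬ MutEx N C a b) : S.card ≤ N * C := by
  have hinj : Set.InjOn (fun a : Fin N × Bool × Fin C => (a.1, a.2.2)) S := by
    intro a ha b hb hab
    obtain ⟨h₁, h₃⟩ := Prod.mk.inj hab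
    have h₂ : a.2.1 = b.2.1 := by
      by_contra h₂
      exact hS a ha b hb (mutEx_iff.2 ⟨h₁, h₂⟩)
    exact Prod.ext h₁ (Prod.ext h₂ h₃)
  calc S.card ≤ Fintype.card (Fin N × Fin C) :=
        Finset.card_le_card_of_injOn _ (fun _ _ => Finset.mem_coe.2 (Finset.mem_univ _)) hinj
    _ = N * C := by simp

/-- Any set of actions admitting a consistent schedule for `MutEx` has at most
`N * C` elements. -/
theorem card_le_of_mutEx_schedule (N C : ℕ) (S : Finset (Fin N × Bool × Fin C))
    (h : ∃ f : Fin N × Bool × Fin C → ℕ, ConsistentSchedule (MutEx N C) S f) :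
    S.card ≤ N * C := by
  obtain ⟨f, hf⟩ := h
  exact card_le_of_forall_not_mutEx fun a ha b hb => hf.not_rel ha hb
end

section
/- Fix N C : ℕ and a list cs of C nonempty clauses over N variables, and let Prec be the precedence relation of the associated reconciliation instance on A := Fin N × Bool × Fin C. If a set S : Finset A with S.card = N * C admits a consistent schedule for Prec, then there exists a valuation η : Fin N → Bool with S = σ(η) that satisfies every clause of cs. -/
/-- A valuation `η` satisfies a clause (a list of literals `(v, s)`) iff it
satisfies some literal of the clause, i.e. `η v = s`. -/
def SatClause {N : ℕ} (η : Fin N → Bool) (c : List (Fin N × Bool)) : Prop :=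
  ∃ l ∈ c, η l.1 = l.2

/-- `bar(v, s)` with clause index `i` is the action `(v, !s, i)`. -/
def bar {N : ℕ} (C : ℕ) (i : Fin C) (l : Fin N × Bool) : Fin N × Bool × Fin C :=
  (l.1, !l.2, i)

/-- The cyclic precedence edges associated to a clause `L` with index `i`:
`bar(v₁,s₁) < bar(v₂,s₂) < … < bar(v_k,s_k) < bar(v₁,s₁)`. -/
def ClauseCycleEdge {N C : ℕ} (L : List (Fin N × Bool)) (i : Fin C)
    (x y : Fin N × Bool × Fin C) : Prop :=
  ∃ k : Fin L.length, x = bar C i (L.get k) ∧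
    y = bar C i (L.get ⟨(k.val + 1) % L.length,
      Nat.mod_lt _ (Nat.lt_of_le_of_lt (Nat.zero_le _) k.isLt)⟩)

/-- The precedence relation of the reconciliation instance associated to a list `cs`
of clauses: the union of the mutual-exclusion constraints and, for each clause index
`i : Fin C`, the cyclic precedence constraints of the `i`-th clause. -/
def Prec (N C : ℕ) (cs : List (List (Fin N × Bool))) (x y : Fin N × Bool × Fin C) : Prop :=
  MutEx N C x y ∨ ∃ i : Fin C, ClauseCycleEdge (cs.getD i.val []) i x y

/-!
A schedule increases strictly along every precedence edge inside `S`, so `S` contains no cycle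
of `Prec`. The mutual-exclusion 2-cycles force all actions of `S` on a variable `v` to carry the
same truth value `η v`; as `S` then has at most one action per pair `(v, i)` and has `N * C`
elements, it has exactly one, so `S = σ(η)`. If `η` falsified the `i`-th clause, every `bar`
action of that clause would lie in `σ(η)`, and the clause's cycle would lie in `S`.
-/

namespace ConsistentSchedule

variable {α : Type*} {r : α → α → Prop} {S : Finset α} {f : α → ℕ}

theorem not_rel_of_rel (hf : ConsistentSchedule r S f) {a b : α} (ha : a ∈ S) (hb : b ∈ S)
    (hab : r a b) : ¬ r b a :=
  fun hba => lt_asymm (hf.2 a ha b hb hab) (hf.2 b hb a ha hba)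

theorem exists_not_rel {ι : Type*} [Finite ι] [Nonempty ι] (hf : ConsistentSchedule r S f)
    (x : ι → α) (hx : ∀ k, x k ∈ S) (next : ι → ι) : ∃ k, ¬ r (x k) (x (next k)) := by
  obtain ⟨k, hk⟩ := Finite.exists_max (f ∘ x)
  exact ⟨k, fun hr => (hk (next k)).not_gt (hf.2 _ (hx k) _ (hx _) hr)⟩

end ConsistentSchedule

theorem Finset.exists_bool_mem_of_card_eq {α β : Type*} [Fintype α] [Fintype β]
    {S : Finset (α × Bool × β)} (hS : ∀ v b b' i, (v, b, i) ∈ S → (v, b', i) ∈ S → b = b')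
    (hcard : S.card = Fintype.card α * Fintype.card β) (v : α) (i : β) :
    ∃ b, (v, b, i) ∈ S := by
  have hinj : Set.InjOn (fun a : α × Bool × β => (a.1, a.2.2)) S := by
    rintro ⟨v, b, i⟩ ha ⟨v', b', i'⟩ ha' heq
    obtain ⟨rfl, rfl⟩ := Prod.mk.inj heq
    rw [hS v b b' i ha ha']
  obtain ⟨⟨_, b, _⟩, hmem, heq⟩ := Finset.surjOn_of_injOn_of_card_le _
    (fun _ _ => Finset.mem_coe.mpr (Finset.mem_univ _)) hinj (by simp [hcard])
    (Finset.mem_univ (v, i))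
  obtain ⟨rfl, rfl⟩ := Prod.mk.inj heq
  exact ⟨b, hmem⟩

section Reconciliation

variable {N C : ℕ} {cs : List (List (Fin N × Bool))} {f : Fin N × Bool × Fin C → ℕ}

theorem ConsistentSchedule.bool_eq_of_mem {S : Finset (Fin N × Bool × Fin C)}
    (hf : ConsistentSchedule (Prec N C cs) S f) {v : Fin N} {b b' : Bool} {i j : Fin C}
    (h : (v, b, i) ∈ S) (h' : (v, b', j) ∈ S) : b = b' := by
  by_contra hne
  have hb' : b' = !b := Bool.eq_not_iff.mpr (Ne.symm hne)
  subst hb'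
  exact hf.not_rel_of_rel h h' (Or.inl ⟨rfl, by simp⟩) (Or.inl ⟨rfl, by simp⟩)

theorem ConsistentSchedule.exists_eq_sigmaSet {S : Finset (Fin N × Bool × Fin C)}
    (hf : ConsistentSchedule (Prec N C cs) S f) (hcard : S.card = N * C) :
    ∃ η, S = sigmaSet N C η := by
  classical
  refine ⟨fun v => decide (∃ i, (v, true, i) ∈ S), ?_⟩
  have hval : ∀ {v b i}, (v, b, i) ∈ S → b = decide (∃ j, (v, true, j) ∈ S) := by
    intro v b i h
    cases b
    · simpa using fun j hj => Bool.false_ne_true (hf.bool_eq_of_mem h hj)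
    · simpa using ⟨i, h⟩
  ext ⟨v, b, i⟩
  simp only [sigmaSet, Finset.mem_filter, Finset.mem_univ, true_and]
  refine ⟨hval, fun hb => ?_⟩
  obtain ⟨b', hb'⟩ := Finset.exists_bool_mem_of_card_eq
    (fun _ _ _ _ h h' => hf.bool_eq_of_mem h h') (by simpa using hcard) v i
  rwa [hb, ← hval hb']

theorem bar_mem_sigmaSet_iff {η : Fin N → Bool} {i : Fin C} {l : Fin N × Bool} :
    bar C i l ∈ sigmaSet N C η ↔ η l.1 ≠ l.2 := by
  obtain ⟨v, s⟩ := l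
  cases s <;> cases hv : η v <;> simp [bar, sigmaSet, hv]

theorem ConsistentSchedule.satClause {η : Fin N → Bool}
    (hf : ConsistentSchedule (Prec N C cs) (sigmaSet N C η) f) (i : Fin C)
    (hi : cs.getD i [] ≠ []) : SatClause η (cs.getD i []) := by
  set L := cs.getD i []
  have : Nonempty (Fin L.length) := ⟨⟨0, List.length_pos_iff.mpr hi⟩⟩
  by_contra hunsat
  have hbar : ∀ k, bar C i (L.get k) ∈ sigmaSet N C η :=
    fun k => bar_mem_sigmaSet_iff.mpr fun hk => hunsat ⟨_, List.get_mem L k, hk⟩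
  obtain ⟨k, hk⟩ := hf.exists_not_rel _ hbar
    fun k => ⟨(k.val + 1) % L.length, Nat.mod_lt _ k.pos⟩
  exact hk (Or.inr ⟨i, k, rfl, rfl⟩)

end Reconciliation

/-- If a set of `N * C` actions admits a consistent schedule for the precedence
relation `Prec`, then it is `σ(η)` for a valuation `η` satisfying every clause. -/
theorem satisfying_of_schedule (N C : ℕ) (cs : List (List (Fin N × Bool)))
    (hlen : cs.length = C) (hne : ∀ c ∈ cs, c ≠ [])
    (S : Finset (Fin N × Bool × Fin C)) (hcard : S.card = N * C)
    (h : ∃ f : Fin N × Bool × Fin C → ℕ, ConsistentSchedule (Prec N C cs) S f) :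
    ∃ η : Fin N → Bool, S = sigmaSet N C η ∧ ∀ c ∈ cs, SatClause η c := by
  obtain ⟨f, hf⟩ := h
  obtain ⟨η, rfl⟩ := hf.exists_eq_sigmaSet hcard
  refine ⟨η, rfl, fun c hc => ?_⟩
  obtain ⟨n, rfl⟩ := List.mem_iff_get.mp hc
  have hgetD : cs.getD (⟨n, hlen ▸ n.isLt⟩ : Fin C) [] = cs.get n := by
    simp [List.getD_eq_getElem?_getD]
  rw [← hgetD] at hc ⊢
  exact hf.satClause _ (hne _ hc)
end
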